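/- arXiv:1704.01123 — 6 statements merged into one kernel-verified Lean document; each statement's English description precedes it below -/
import Mathlib

section
/- For the H-twisted Dorfman bracket on TM ⊕ T*M with H a (not necessarily closed) 3-form, the failure of the Leibniz identity is measured exactly by dH: one has [ψ,[ψ',ψ'']] − [[ψ,ψ'],ψ''] − [ψ',[ψ,ψ'']] = (0, −dH(X,Y,Z,·)) where X, Y, Z are the vector parts of ψ, ψ', ψ''. In particular, the Leibniz identity holds for all sections if and only if dH = 0. -/
/-!
An algebraic model of the generalized tangent bundle `TM ⊕ T*M`:
`R` is the ring of smooth functions `C^∞(M)`, vector fields are derivations of `R`,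
and sections of `TM ⊕ T*M` are pairs of a vector field and a `1`-form
(an `R`-linear functional on vector fields).
-/

section Dorfman

variable {R : Type*} [CommRing R] [Algebra ℝ R]

/-- A covector part of a section: an `R`-linear functional on vector fields. -/
def IsOneForm (ξ : Derivation ℝ R R → R) : Prop :=
  ∀ (f : R) (a b : Derivation ℝ R R), ξ (f • a + b) = f * ξ a + ξ b

/-- A `3`-form on `M`: alternating and `R`-multilinear in each slot. -/
def IsThreeForm (H : Derivation ℝ R R → Derivation ℝ R R → Derivation ℝ R R → R) : Prop :=
  (∀ (f : R) (X X' Y Z), H (f • X + X') Y Z = f * H X Y Z + H X' Y Z) ∧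
  (∀ (f : R) (X Y Y' Z), H X (f • Y + Y') Z = f * H X Y Z + H X Y' Z) ∧
  (∀ (f : R) (X Y Z Z'), H X Y (f • Z + Z') = f * H X Y Z + H X Y Z') ∧
  (∀ X Y Z, H X Y Z = - H Y X Z) ∧ (∀ X Y Z, H X Y Z = - H X Z Y)

/-- The de Rham differential of a `3`-form, by the global (Koszul) formula. -/
def dThree (H : Derivation ℝ R R → Derivation ℝ R R → Derivation ℝ R R → R)
    (X Y Z W : Derivation ℝ R R) : R :=
  X (H Y Z W) - Y (H X Z W) + Z (H X Y W) - W (H X Y Z)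
    - H ⁅X, Y⁆ Z W + H ⁅X, Z⁆ Y W - H ⁅X, W⁆ Y Z
    - H ⁅Y, Z⁆ X W + H ⁅Y, W⁆ X Z - H ⁅Z, W⁆ X Y

/-- The `H`-twisted Dorfman bracket
`[(X,ξ),(Y,η)] = ([X,Y], L_X η − i_Y dξ − H(X,Y,·))` written pointwise. -/
def dorfman (H : Derivation ℝ R R → Derivation ℝ R R → Derivation ℝ R R → R)
    (ψ φ : Derivation ℝ R R × (Derivation ℝ R R → R)) :
    Derivation ℝ R R × (Derivation ℝ R R → R) :=
  (⁅ψ.1, φ.1⁆, fun Z =>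
    (ψ.1 (φ.2 Z) - φ.2 ⁅ψ.1, Z⁆)
      - (φ.1 (ψ.2 Z) - Z (ψ.2 φ.1) - ψ.2 ⁅φ.1, Z⁆)
      - H ψ.1 φ.1 Z)

/-- The canonical pairing `⟨(X,ξ),(Y,η)⟩ = η(X) + ξ(Y)`. -/
def pairTV (ψ φ : Derivation ℝ R R × (Derivation ℝ R R → R)) : R :=
  ψ.2 φ.1 + φ.2 ψ.1

/-- Multiplication of a section by a function. -/
def smulTV (f : R) (ψ : Derivation ℝ R R × (Derivation ℝ R R → R)) :
    Derivation ℝ R R × (Derivation ℝ R R → R) :=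
  (f • ψ.1, fun Z => f * ψ.2 Z)

/-- Sum of sections. -/
def addTV (ψ φ : Derivation ℝ R R × (Derivation ℝ R R → R)) :
    Derivation ℝ R R × (Derivation ℝ R R → R) :=
  (ψ.1 + φ.1, fun Z => ψ.2 Z + φ.2 Z)

/-- Negative of a section. -/
def negTV (ψ : Derivation ℝ R R × (Derivation ℝ R R → R)) :
    Derivation ℝ R R × (Derivation ℝ R R → R) :=
  (-ψ.1, fun Z => - ψ.2 Z)

namespace IsOneForm

theorem map_sub {ξ : Derivation ℝ R R → R} (hξ : IsOneForm ξ) (a b : Derivation ℝ R R) :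
    ξ (a - b) = ξ a - ξ b := by
  have h := hξ (-1) b a
  rw [neg_one_smul, neg_add_eq_sub] at h
  rw [h]; ring

theorem zero : IsOneForm (fun _ : Derivation ℝ R R => (0 : R)) :=
  fun _ _ _ => by ring

end IsOneForm

/- Expanding both sides, the untwisted terms cancel by additivity of the forms and the
Jacobi identity for derivations; the terms involving `H` are, up to antisymmetry of `H`,
exactly the ten terms of the Koszul formula for `dH`. -/
theorem dorfman_jacobiator_snd_apply
    (H : Derivation ℝ R R → Derivation ℝ R R → Derivation ℝ R R → R)
    (hH₁₂ : ∀ X Y Z, H X Y Z = - H Y X Z) (hH₂₃ : ∀ X Y Z, H X Y Z = - H X Z Y)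
    {ξ η ζ : Derivation ℝ R R → R} (hξ : IsOneForm ξ) (hη : IsOneForm η) (hζ : IsOneForm ζ)
    (X Y Z W : Derivation ℝ R R) :
    (dorfman H (X, ξ) (dorfman H (Y, η) (Z, ζ))).2 W =
      (dorfman H (dorfman H (X, ξ) (Y, η)) (Z, ζ)).2 W
        + (dorfman H (Y, η) (dorfman H (X, ξ) (Z, ζ))).2 W - dThree H X Y Z W := by
  simp only [dorfman, dThree, Derivation.commutator_apply, lie_lie, map_sub,
    hξ.map_sub, hη.map_sub, hζ.map_sub]
  linear_combination -hH₁₂ X ⁅Y, Z⁆ W + hH₁₂ Y ⁅X, Z⁆ W - hH₁₂ X ⁅Z, W⁆ Y - hH₁₂ ⁅X, W⁆ Y Z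
    + hH₂₃ Y ⁅X, W⁆ Z + hH₁₂ ⁅Y, W⁆ X Z - hH₂₃ X ⁅Y, W⁆ Z + hH₂₃ X ⁅Z, W⁆ Y

theorem dorfman_jacobiator
    (H : Derivation ℝ R R → Derivation ℝ R R → Derivation ℝ R R → R) (hH : IsThreeForm H)
    (ψ φ χ : Derivation ℝ R R × (Derivation ℝ R R → R))
    (hψ : IsOneForm ψ.2) (hφ : IsOneForm φ.2) (hχ : IsOneForm χ.2) :
    dorfman H ψ (dorfman H φ χ) =
      addTV (addTV (dorfman H (dorfman H ψ φ) χ) (dorfman H φ (dorfman H ψ χ)))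
        ((0 : Derivation ℝ R R), fun W => - dThree H ψ.1 φ.1 χ.1 W) := by
  obtain ⟨-, -, -, hH₁₂, hH₂₃⟩ := hH
  refine Prod.ext ?_ (funext fun W => ?_)
  · simp only [dorfman, addTV, add_zero]
    exact leibniz_lie ψ.1 φ.1 χ.1
  · simp only [addTV]
    rw [dorfman_jacobiator_snd_apply H hH₁₂ hH₂₃ hψ hφ hχ, ← sub_eq_add_neg]

theorem addTV_zero_fst_eq_self_iff (ψ : Derivation ℝ R R × (Derivation ℝ R R → R))
    (ω : Derivation ℝ R R → R) : addTV ψ (0, ω) = ψ ↔ ∀ W, ω W = 0 := by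
  simp [addTV, Prod.ext_iff, funext_iff]

theorem dorfman_leibniz_iff_dThree_eq_zero
    (H : Derivation ℝ R R → Derivation ℝ R R → Derivation ℝ R R → R) (hH : IsThreeForm H)
    (ψ φ χ : Derivation ℝ R R × (Derivation ℝ R R → R))
    (hψ : IsOneForm ψ.2) (hφ : IsOneForm φ.2) (hχ : IsOneForm χ.2) :
    dorfman H ψ (dorfman H φ χ) =
        addTV (dorfman H (dorfman H ψ φ) χ) (dorfman H φ (dorfman H ψ χ)) ↔
      ∀ W, dThree H ψ.1 φ.1 χ.1 W = 0 := by
  rw [dorfman_jacobiator H hH ψ φ χ hψ hφ hχ, addTV_zero_fst_eq_self_iff]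
  simp only [neg_eq_zero]

/-- For the `H`-twisted Dorfman bracket with `H` a (not necessarily
closed) `3`-form, the failure of the Leibniz identity is measured exactly by `dH`:
the Jacobiator equals `(0, −dH(X,Y,Z,·))` where `X, Y, Z` are the vector parts of
the three sections. In particular, the Leibniz identity holds for all sections if
and only if `dH = 0`. -/
theorem dorfman_jacobiator_eq_dH
    (H : Derivation ℝ R R → Derivation ℝ R R → Derivation ℝ R R → R)
    (hH : IsThreeForm H) :
    -- the Jacobiator is `(0, −dH(X,Y,Z,·))`
    (∀ ψ φ χ, IsOneForm ψ.2 → IsOneForm φ.2 → IsOneForm χ.2 →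
      dorfman H ψ (dorfman H φ χ) =
        addTV (addTV (dorfman H (dorfman H ψ φ) χ) (dorfman H φ (dorfman H ψ χ)))
          ((0 : Derivation ℝ R R), fun W => - dThree H ψ.1 φ.1 χ.1 W)) ∧
    -- the Leibniz identity holds for all sections iff `dH = 0`
    ((∀ ψ φ χ, IsOneForm ψ.2 → IsOneForm φ.2 → IsOneForm χ.2 →
      dorfman H ψ (dorfman H φ χ) =
        addTV (dorfman H (dorfman H ψ φ) χ) (dorfman H φ (dorfman H ψ χ))) ↔
      (∀ X Y Z W, dThree H X Y Z W = 0)) := by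
  refine ⟨dorfman_jacobiator H hH, fun hLeibniz X Y Z W => ?_, fun hdH ψ φ χ hψ hφ hχ => ?_⟩
  · have h0 := IsOneForm.zero (R := R)
    exact (dorfman_leibniz_iff_dThree_eq_zero H hH (X, _) (Y, _) (Z, _) h0 h0 h0).1
      (hLeibniz _ _ _ h0 h0 h0) W
  · exact (dorfman_leibniz_iff_dThree_eq_zero H hH ψ φ χ hψ hφ hχ).2 (hdH _ _ _)

end Dorfman
end

section
/- Let ∇ be a Courant algebroid connection on a Courant algebroid (E, ρ, ⟨·,·⟩_E, [·,·]_E). Define T_G(ψ,ψ',ψ'') = ⟨∇_ψ ψ' − ∇_{ψ'} ψ − [ψ,ψ']_E, ψ''⟩_E + ⟨∇_{ψ''} ψ, ψ'⟩_E. Then T_G is C^∞(M)-trilinear and totally skew-symmetric in its three arguments, i.e., T_G defines a 3-form on E. -/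
/-!
An algebraic model of a Courant algebroid over a manifold `M`:
`R` plays the role of the ring of smooth functions `C^∞(M)`, vector fields on `M`
are modelled by derivations of `R`, and `E` plays the role of the module of
sections `Γ(E)`.
-/

/-- A Courant algebroid: a module `E` (of sections) with an anchor `ρ` valued in
vector fields (derivations of `R`), a symmetric `R`-bilinear pairing, and an
`ℝ`-bilinear bracket, satisfying the Leibniz rule, the Leibniz (Jacobi) identity,
invariance of the pairing and the symmetric-part formula, where
`D : C^∞(M) → Γ(E)` is determined by `⟨D f, ψ⟩ = ρ(ψ).f`. -/
structure CourantAlgebroid (R : Type*) [CommRing R] [Algebra ℝ R]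
    (E : Type*) [AddCommGroup E] [Module ℝ E] [Module R E] where
  ρ : E → Derivation ℝ R R
  ρ_smul : ∀ (f : R) (ψ : E), ρ (f • ψ) = f • ρ ψ
  ρ_add : ∀ ψ ψ', ρ (ψ + ψ') = ρ ψ + ρ ψ'
  pair : E → E → R
  pair_symm : ∀ ψ ψ', pair ψ ψ' = pair ψ' ψ
  pair_smul : ∀ (f : R) (ψ ψ' : E), pair (f • ψ) ψ' = f * pair ψ ψ'
  pair_add : ∀ ψ₁ ψ₂ ψ', pair (ψ₁ + ψ₂) ψ' = pair ψ₁ ψ' + pair ψ₂ ψ'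
  bracket : E → E → E
  bracket_add_left : ∀ ψ₁ ψ₂ ψ', bracket (ψ₁ + ψ₂) ψ' = bracket ψ₁ ψ' + bracket ψ₂ ψ'
  bracket_add_right : ∀ ψ ψ₁ ψ₂, bracket ψ (ψ₁ + ψ₂) = bracket ψ ψ₁ + bracket ψ ψ₂
  bracket_smulR : ∀ (r : ℝ) (ψ ψ' : E), bracket ψ (r • ψ') = r • bracket ψ ψ'
  /-- The map `D : C^∞(M) → Γ(E)`. -/
  Dz : R → E
  pair_Dz : ∀ (f : R) (ψ : E), pair (Dz f) ψ = ρ ψ f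
  /-- Leibniz rule `[ψ, fψ'] = f[ψ,ψ'] + (ρ(ψ).f)ψ'`. -/
  leibniz : ∀ (ψ ψ' : E) (f : R), bracket ψ (f • ψ') = f • bracket ψ ψ' + (ρ ψ f) • ψ'
  /-- Leibniz (Jacobi) identity. -/
  jacobi : ∀ ψ ψ' ψ'', bracket ψ (bracket ψ' ψ'') =
    bracket (bracket ψ ψ') ψ'' + bracket ψ' (bracket ψ ψ'')
  /-- Invariance of the pairing. -/
  invariance : ∀ ψ ψ' ψ'', ρ ψ (pair ψ' ψ'') =
    pair (bracket ψ ψ') ψ'' + pair ψ' (bracket ψ ψ'')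
  /-- Symmetric part formula `[ψ,ψ'] = −[ψ',ψ] + D⟨ψ,ψ'⟩`. -/
  sym_part : ∀ ψ ψ', bracket ψ ψ' = - bracket ψ' ψ + Dz (pair ψ ψ')

variable {R : Type*} [CommRing R] [Algebra ℝ R]
variable {E : Type*} [AddCommGroup E] [Module ℝ E] [Module R E]

/-- The torsion `3`-form
`T_G(ψ,ψ',ψ'') = ⟨∇_ψ ψ' − ∇_{ψ'} ψ − [ψ,ψ']_E, ψ''⟩_E + ⟨∇_{ψ''} ψ, ψ'⟩_E`
of a Courant algebroid connection `∇`. -/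
def torsionForm (C : CourantAlgebroid R E) (nab : E → E → E) (ψ ψ' ψ'' : E) : R :=
  C.pair (nab ψ ψ' - nab ψ' ψ - C.bracket ψ ψ') ψ'' + C.pair (nab ψ'' ψ) ψ'

/-!
Metric compatibility of `∇` and invariance of the pairing both write `ρ(ψ).⟨ψ',ψ''⟩` as a
sum symmetric in `ψ', ψ''`; comparing them makes `T_G` skew in its last two arguments. The
symmetric-part formula `⟨[ψ,ψ'] + [ψ',ψ], ψ''⟩ = ρ(ψ'').⟨ψ,ψ'⟩`, compared with metric
compatibility for `∇_{ψ''}`, makes it skew in its first two. `T_G` is visibly `C^∞(M)`-linear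
in its last argument, since `∇_ψ` is `C^∞(M)`-linear in `ψ`, and total skew-symmetry
transports this to the other two arguments.
-/
namespace CourantAlgebroid

variable (C : CourantAlgebroid R E)

theorem pair_neg_left (x y : E) : C.pair (-x) y = -C.pair x y := by
  rw [← neg_one_smul R x, C.pair_smul, neg_one_mul]

theorem pair_add_right (x y₁ y₂ : E) : C.pair x (y₁ + y₂) = C.pair x y₁ + C.pair x y₂ := by
  rw [C.pair_symm, C.pair_add, C.pair_symm y₁, C.pair_symm y₂]

theorem pair_smul_right (f : R) (x y : E) : C.pair x (f • y) = f * C.pair x y := by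
  rw [C.pair_symm, C.pair_smul, C.pair_symm y]

theorem pair_bracket_add_pair_bracket_swap (ψ ψ' ψ'' : E) :
    C.pair (C.bracket ψ ψ') ψ'' + C.pair (C.bracket ψ' ψ) ψ'' = C.ρ ψ'' (C.pair ψ ψ') := by
  rw [C.sym_part ψ ψ', C.pair_add, C.pair_neg_left, C.pair_Dz]
  ring

end CourantAlgebroid

section TorsionForm

variable (C : CourantAlgebroid R E) {nab : E → E → E}

theorem torsionForm_swap_left
    (hmetric : ∀ ψ ψ' ψ'', C.ρ ψ (C.pair ψ' ψ'') =
      C.pair (nab ψ ψ') ψ'' + C.pair ψ' (nab ψ ψ'')) (ψ ψ' ψ'' : E) :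
    torsionForm C nab ψ ψ' ψ'' = -torsionForm C nab ψ' ψ ψ'' := by
  have hsym := C.pair_bracket_add_pair_bracket_swap ψ ψ' ψ''
  have hnab := hmetric ψ'' ψ ψ'
  rw [C.pair_symm ψ (nab ψ'' ψ')] at hnab
  simp only [torsionForm, sub_eq_add_neg, C.pair_add, C.pair_neg_left]
  linear_combination -hsym - hnab

theorem torsionForm_swap_right
    (hmetric : ∀ ψ ψ' ψ'', C.ρ ψ (C.pair ψ' ψ'') =
      C.pair (nab ψ ψ') ψ'' + C.pair ψ' (nab ψ ψ'')) (ψ ψ' ψ'' : E) :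
    torsionForm C nab ψ ψ' ψ'' = -torsionForm C nab ψ ψ'' ψ' := by
  have hinv := C.invariance ψ ψ' ψ''
  have hnab := hmetric ψ ψ' ψ''
  rw [C.pair_symm ψ' (C.bracket ψ ψ'')] at hinv
  rw [C.pair_symm ψ' (nab ψ ψ'')] at hnab
  simp only [torsionForm, sub_eq_add_neg, C.pair_add, C.pair_neg_left]
  linear_combination hinv - hnab

theorem torsionForm_cycle
    (hmetric : ∀ ψ ψ' ψ'', C.ρ ψ (C.pair ψ' ψ'') =
      C.pair (nab ψ ψ') ψ'' + C.pair ψ' (nab ψ ψ'')) (ψ ψ' ψ'' : E) :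
    torsionForm C nab ψ ψ' ψ'' = torsionForm C nab ψ' ψ'' ψ := by
  rw [torsionForm_swap_left C hmetric, torsionForm_swap_right C hmetric, neg_neg]

theorem torsionForm_smul_add_right
    (h1 : ∀ (f : R) (ψ ψ' : E), nab (f • ψ) ψ' = f • nab ψ ψ')
    (h1' : ∀ ψ₁ ψ₂ ψ', nab (ψ₁ + ψ₂) ψ' = nab ψ₁ ψ' + nab ψ₂ ψ')
    (f : R) (ψ ψ' ψ'' φ : E) :
    torsionForm C nab ψ ψ' (f • ψ'' + φ) =
      f * torsionForm C nab ψ ψ' ψ'' + torsionForm C nab ψ ψ' φ := by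
  simp only [torsionForm, h1, h1', C.pair_add, C.pair_smul, C.pair_add_right,
    C.pair_smul_right]
  ring

end TorsionForm

theorem torsionForm_is_three_form_general
    (C : CourantAlgebroid R E) (nab : E → E → E)
    (h1 : ∀ (f : R) (ψ ψ' : E), nab (f • ψ) ψ' = f • nab ψ ψ')
    (h1' : ∀ ψ₁ ψ₂ ψ', nab (ψ₁ + ψ₂) ψ' = nab ψ₁ ψ' + nab ψ₂ ψ')
    (hmetric : ∀ ψ ψ' ψ'', C.ρ ψ (C.pair ψ' ψ'') =
      C.pair (nab ψ ψ') ψ'' + C.pair ψ' (nab ψ ψ'')) :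
    -- totally skew-symmetric
    (∀ ψ ψ' ψ'', torsionForm C nab ψ ψ' ψ'' = - torsionForm C nab ψ' ψ ψ'') ∧
    (∀ ψ ψ' ψ'', torsionForm C nab ψ ψ' ψ'' = - torsionForm C nab ψ ψ'' ψ') ∧
    -- `C^∞(M)`-trilinear
    (∀ (f : R) (ψ φ ψ' ψ'' : E), torsionForm C nab (f • ψ + φ) ψ' ψ'' =
      f * torsionForm C nab ψ ψ' ψ'' + torsionForm C nab φ ψ' ψ'') ∧
    (∀ (f : R) (ψ ψ' φ ψ'' : E), torsionForm C nab ψ (f • ψ' + φ) ψ'' =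
      f * torsionForm C nab ψ ψ' ψ'' + torsionForm C nab ψ φ ψ'') ∧
    (∀ (f : R) (ψ ψ' ψ'' φ : E), torsionForm C nab ψ ψ' (f • ψ'' + φ) =
      f * torsionForm C nab ψ ψ' ψ'' + torsionForm C nab ψ ψ' φ) := by
  have cyc := torsionForm_cycle C hmetric
  have lin := torsionForm_smul_add_right C h1 h1'
  refine ⟨torsionForm_swap_left C hmetric, torsionForm_swap_right C hmetric, ?_, ?_, lin⟩
  · intro f ψ φ ψ' ψ''
    rw [cyc _ ψ' ψ'', lin, ← cyc ψ, ← cyc φ]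
  · intro f ψ ψ' φ ψ''
    rw [← cyc ψ'' ψ, lin, cyc ψ'', cyc ψ'']

/-- For a Courant algebroid connection `∇` (first slot
`C^∞(M)`-linear, Leibniz rule in the second slot, compatible with the pairing),
the torsion `T_G` is `C^∞(M)`-trilinear and totally skew-symmetric, i.e. it
defines a `3`-form on `E`. -/
theorem torsionForm_is_three_form
    (C : CourantAlgebroid R E) (nab : E → E → E)
    (h1 : ∀ (f : R) (ψ ψ' : E), nab (f • ψ) ψ' = f • nab ψ ψ')
    (h1' : ∀ ψ₁ ψ₂ ψ', nab (ψ₁ + ψ₂) ψ' = nab ψ₁ ψ' + nab ψ₂ ψ')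
    (h2 : ∀ (f : R) (ψ ψ' : E), nab ψ (f • ψ') = f • nab ψ ψ' + (C.ρ ψ f) • ψ')
    (h2' : ∀ ψ ψ₁ ψ₂, nab ψ (ψ₁ + ψ₂) = nab ψ ψ₁ + nab ψ ψ₂)
    (hmetric : ∀ ψ ψ' ψ'', C.ρ ψ (C.pair ψ' ψ'') =
      C.pair (nab ψ ψ') ψ'' + C.pair ψ' (nab ψ ψ'')) :
    -- totally skew-symmetric
    (∀ ψ ψ' ψ'', torsionForm C nab ψ ψ' ψ'' = - torsionForm C nab ψ' ψ ψ'') ∧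
    (∀ ψ ψ' ψ'', torsionForm C nab ψ ψ' ψ'' = - torsionForm C nab ψ ψ'' ψ') ∧
    -- `C^∞(M)`-trilinear
    (∀ (f : R) (ψ φ ψ' ψ'' : E), torsionForm C nab (f • ψ + φ) ψ' ψ'' =
      f * torsionForm C nab ψ ψ' ψ'' + torsionForm C nab φ ψ' ψ'') ∧
    (∀ (f : R) (ψ ψ' φ ψ'' : E), torsionForm C nab ψ (f • ψ' + φ) ψ'' =
      f * torsionForm C nab ψ ψ' ψ'' + torsionForm C nab ψ φ ψ'') ∧
    (∀ (f : R) (ψ ψ' ψ'' φ : E), torsionForm C nab ψ ψ' (f • ψ'' + φ) =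
      f * torsionForm C nab ψ ψ' ψ'' + torsionForm C nab ψ ψ' φ) :=
  torsionForm_is_three_form_general C nab h1 h1' hmetric
end

section
/- Let E be a Courant algebroid over a connected manifold M with fiber-wise surjective anchor ρ, and let ℜ: 𝔤 → Γ(E) be a Lie algebra homomorphism into the Courant bracket, i.e., ℜ([x,y]_𝔤) = [ℜ(x),ℜ(y)]_E. Then the function ⟨ℜ(x),ℜ(y)⟩_E is constant on M for all x,y ∈ 𝔤, and the resulting bilinear form (x,y)_𝔤 := −⟨ℜ(x),ℜ(y)⟩_E on 𝔤 is symmetric and ad-invariant: ([x,y]_𝔤, z)_𝔤 + (y, [x,z]_𝔤)_𝔤 = 0. -/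
namespace CourantAlgebroid

variable {R : Type*} [CommRing R] [Algebra ℝ R]
  {E : Type*} [AddCommGroup E] [Module ℝ E] [Module R E] (C : CourantAlgebroid R E)

theorem Dz_pair_eq_bracket_add_bracket (ψ ψ' : E) :
    C.Dz (C.pair ψ ψ') = C.bracket ψ ψ' + C.bracket ψ' ψ := by
  rw [C.sym_part ψ ψ']
  abel

theorem Dz_pair_eq_zero_of_bracket_skew {ψ ψ' : E}
    (hskew : C.bracket ψ' ψ = -C.bracket ψ ψ') : C.Dz (C.pair ψ ψ') = 0 := by
  rw [Dz_pair_eq_bracket_add_bracket, hskew, add_neg_cancel]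

theorem pair_bracket_add_pair_bracket_eq_zero {ψ' ψ'' : E} {r : ℝ}
    (hr : C.pair ψ' ψ'' = algebraMap ℝ R r) (ψ : E) :
    C.pair (C.bracket ψ ψ') ψ'' + C.pair ψ' (C.bracket ψ ψ'') = 0 := by
  rw [← C.invariance, hr, Derivation.map_algebraMap]

end CourantAlgebroid

theorem bracket_skew_of_map_lie {g : Type*} [LieRing g] {E : Type*} [AddCommGroup E]
    {ℜ : g → E} {bracket : E → E → E} (hadd : ∀ x y : g, ℜ (x + y) = ℜ x + ℜ y)
    (hhom : ∀ x y : g, ℜ ⁅x, y⁆ = bracket (ℜ x) (ℜ y)) (x y : g) :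
    bracket (ℜ y) (ℜ x) = -bracket (ℜ x) (ℜ y) := by
  rw [← hhom, ← hhom, ← lie_skew]
  exact map_neg (AddMonoidHom.mk' ℜ hadd) _

/-- Let `E` be a Courant algebroid over a connected manifold `M`
with fiber-wise surjective anchor (so that `Df = 0` forces `f` constant), and let
`ℜ : 𝔤 → Γ(E)` be linear and bracket-preserving.  Then `⟨ℜ(x),ℜ(y)⟩_E` is a
constant function for all `x, y ∈ 𝔤`, and the bilinear form
`(x,y)_𝔤 := −⟨ℜ(x),ℜ(y)⟩_E` is symmetric and ad-invariant:
`([x,y]_𝔤, z)_𝔤 + (y, [x,z]_𝔤)_𝔤 = 0`. -/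
theorem equivariant_pairing_constant_symmetric_adInvariant
    {R : Type*} [CommRing R] [Algebra ℝ R]
    {E : Type*} [AddCommGroup E] [Module ℝ E] [Module R E]
    (C : CourantAlgebroid R E)
    -- `M` connected and `ρ` fiber-wise surjective: `Df = 0` forces `f` constant
    (hconst : ∀ f : R, C.Dz f = 0 → ∃ r : ℝ, f = algebraMap ℝ R r)
    (g : Type*) [LieRing g] [LieAlgebra ℝ g]
    (ℜ : g → E)
    (hlin : ∀ (r : ℝ) (x y : g), ℜ (r • x + y) = r • ℜ x + ℜ y)
    (hhom : ∀ x y : g, ℜ ⁅x, y⁆ = C.bracket (ℜ x) (ℜ y)) :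
    -- `⟨ℜ(x),ℜ(y)⟩_E` is constant on `M`
    (∀ x y : g, ∃ r : ℝ, C.pair (ℜ x) (ℜ y) = algebraMap ℝ R r) ∧
    -- `(x,y)_𝔤 = −⟨ℜ(x),ℜ(y)⟩_E` is symmetric …
    (∀ x y : g, -C.pair (ℜ x) (ℜ y) = -C.pair (ℜ y) (ℜ x)) ∧
    -- … and ad-invariant
    (∀ x y z : g,
      (-C.pair (ℜ ⁅x, y⁆) (ℜ z)) + (-C.pair (ℜ y) (ℜ ⁅x, z⁆)) = 0) := by
  have hadd : ∀ x y : g, ℜ (x + y) = ℜ x + ℜ y := fun x y => by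
    simpa using hlin 1 x y
  have hconstant : ∀ x y : g, ∃ r : ℝ, C.pair (ℜ x) (ℜ y) = algebraMap ℝ R r := fun x y =>
    hconst _ (C.Dz_pair_eq_zero_of_bracket_skew (bracket_skew_of_map_lie hadd hhom x y))
  refine ⟨hconstant, fun x y => by rw [C.pair_symm], fun x y z => ?_⟩
  obtain ⟨r, hr⟩ := hconstant y z
  rw [hhom, hhom, ← neg_add, C.pair_bracket_add_pair_bracket_eq_zero hr, neg_zero]
end

section
/- Let P → M be a principal G-bundle with connection A, 𝔤 compact semisimple with Killing form ⟨·,·⟩_𝔤 and H = π*(H₀) + ½ CS₃(A) the twisting 3-form on P. Define ℜ(x) = (#x, −½⟨A,x⟩_𝔤) ∈ Γ(TP ⊕ T*P). Then the H-twisted Dorfman bracket satisfies x ▷ (Y,η) := [ℜ(x),(Y,η)] = ([#x, Y], L_{#x} η) for all G-invariant H; i.e., the induced action on TP ⊕ T*P is the canonical lift of the principal action. (Key identity: i_{#x} CS₃(A) = ⟨dA, x⟩_𝔤.) -/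
/-!
An algebraic model of a principal `G`-bundle `π : P → M`:
`R` is the ring of smooth functions `C^∞(P)`, vector fields on `P` are derivations
of `R`, `g` is the Lie algebra of `G`, and `S` models the `R`-module `C^∞(P, 𝔤)` of
`𝔤`-valued functions, with its pointwise Lie bracket `brS`, pointwise invariant
pairing `c`, componentwise derivative `par`, constants `ι : 𝔤 → C^∞(P,𝔤)`,
fundamental vector fields `σ` and their `C^∞(P)`-linear extension
`σhat : C^∞(P,𝔤) → 𝔛(P)` (the map `j`).
-/

structure GaugeModel (R : Type*) [CommRing R] [Algebra ℝ R]
    (g : Type*) [LieRing g] [LieAlgebra ℝ g]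
    (S : Type*) [AddCommGroup S] [Module R S] where
  /-- fundamental vector fields of the (right) `G`-action. -/
  σ : g → Derivation ℝ R R
  /-- the map `j` : vertical vector field generated by a `𝔤`-valued function. -/
  σhat : S → Derivation ℝ R R
  /-- constant `𝔤`-valued functions. -/
  ι : g → S
  /-- pointwise Lie bracket on `𝔤`-valued functions. -/
  brS : S → S → S
  /-- pointwise ad-invariant pairing `(·,·)_𝔤`. -/
  c : S → S → R
  /-- componentwise derivative of `𝔤`-valued functions along a vector field. -/
  par : Derivation ℝ R R → S → S
  σ_bracket : ∀ x y : g, ⁅σ x, σ y⁆ = σ ⁅x, y⁆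
  σhat_ι : ∀ x : g, σhat (ι x) = σ x
  σhat_smul : ∀ (f : R) (s : S), σhat (f • s) = f • σhat s
  σhat_add : ∀ s t : S, σhat (s + t) = σhat s + σhat t
  ι_add : ∀ x y : g, ι (x + y) = ι x + ι y
  ι_bracket : ∀ x y : g, ι ⁅x, y⁆ = brS (ι x) (ι y)
  brS_smul_left : ∀ (f : R) (a b : S), brS (f • a) b = f • brS a b
  brS_add_left : ∀ a a' b : S, brS (a + a') b = brS a b + brS a' b
  brS_antisymm : ∀ a b : S, brS a b = - brS b a
  brS_leibniz : ∀ a b e : S, brS a (brS b e) = brS (brS a b) e + brS b (brS a e)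
  c_symm : ∀ a b : S, c a b = c b a
  c_smul_left : ∀ (f : R) (a b : S), c (f • a) b = f * c a b
  c_add_left : ∀ a a' b : S, c (a + a') b = c a b + c a' b
  /-- ad-invariance of the pairing. -/
  c_ad : ∀ a b e : S, c (brS a b) e + c b (brS a e) = 0
  par_add : ∀ (X : Derivation ℝ R R) (s t : S), par X (s + t) = par X s + par X t
  par_smul : ∀ (X : Derivation ℝ R R) (f : R) (s : S),
    par X (f • s) = (X f) • s + f • par X s
  par_lin : ∀ (f : R) (X Y : Derivation ℝ R R) (s : S),
    par (f • X + Y) s = f • par X s + par Y s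
  /-- `par` is the (flat) componentwise derivative. -/
  par_flat : ∀ (X Y : Derivation ℝ R R) (s : S),
    par ⁅X, Y⁆ s = par X (par Y s) - par Y (par X s)
  par_const : ∀ (X : Derivation ℝ R R) (x : g), par X (ι x) = 0
  par_brS : ∀ (X : Derivation ℝ R R) (a b : S),
    par X (brS a b) = brS (par X a) b + brS a (par X b)
  par_c : ∀ (X : Derivation ℝ R R) (a b : S),
    X (c a b) = c (par X a) b + c a (par X b)
  /-- bracket of vertical vector fields. -/
  vert_bracket : ∀ a b : S,
    ⁅σhat a, σhat b⁆ = σhat (brS a b + par (σhat a) b - par (σhat b) a)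

namespace GaugeModel

variable {R : Type*} [CommRing R] [Algebra ℝ R]
variable {g : Type*} [LieRing g] [LieAlgebra ℝ g]
variable {S : Type*} [AddCommGroup S] [Module R S]

/-- A `𝔤`-valued function is `Ad`-equivariant (a section of the adjoint bundle
`𝔤_P`), infinitesimally: its derivative along any vertical vector field is given
by minus the pointwise bracket. -/
def IsEquivariant (M : GaugeModel R g S) (s : S) : Prop :=
  ∀ a : S, M.par (M.σhat a) s = - M.brS a s

end GaugeModel

namespace GaugeModel

variable {R : Type*} [CommRing R] [Algebra ℝ R]
variable {g : Type*} [LieRing g] [LieAlgebra ℝ g]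
variable {S : Type*} [AddCommGroup S] [Module R S]

/-- `dA(X,Y) = X.A(Y) − Y.A(X) − A([X,Y])` for a `𝔤`-valued `1`-form `A` on `P`. -/
def dA (M : GaugeModel R g S) (A : Derivation ℝ R R → S)
    (X Y : Derivation ℝ R R) : S :=
  M.par X (A Y) - M.par Y (A X) - A ⁅X, Y⁆

/-- The Chern–Simons `3`-form
`CS₃(A) = ⟨dA ∧ A⟩_𝔤 + (1/3)⟨[A ∧ A]_𝔤 ∧ A⟩_𝔤`, written out on vector fields. -/
noncomputable def CS3 (M : GaugeModel R g S) (A : Derivation ℝ R R → S)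
    (X Y Z : Derivation ℝ R R) : R :=
  (M.c (M.dA A X Y) (A Z) + M.c (M.dA A Y Z) (A X) + M.c (M.dA A Z X) (A Y))
    + (2 / 3 : ℝ) • (M.c (M.brS (A X) (A Y)) (A Z)
        + M.c (M.brS (A Y) (A Z)) (A X) + M.c (M.brS (A Z) (A X)) (A Y))

/-! Contracting with `#x`, the connection axioms give `i_{#x} dA = −[x, A]`, and ad-invariance
of the pairing makes the cubic terms of `CS₃(A)` cancel the two `⟨dA ∧ A⟩` terms that involve
`#x`, leaving `⟨dA, x⟩`. Since `x` is constant, `d⟨A, x⟩ = ⟨dA, x⟩`; as `H₀` is basic, the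
correction `−i_Y dξ − H(#x, Y, ·)` of the Dorfman bracket is `½⟨dA, x⟩ − ½⟨dA, x⟩ = 0`. -/

section Pairing

variable (M : GaugeModel R g S)

theorem c_neg_left (a b : S) : M.c (-a) b = -M.c a b := by
  simpa [neg_one_smul] using M.c_smul_left (-1) a b

theorem c_sub_left (a b e : S) : M.c (a - b) e = M.c a e - M.c b e := by
  rw [sub_eq_add_neg, M.c_add_left, c_neg_left, sub_eq_add_neg]

theorem c_zero_right (a : S) : M.c a 0 = 0 := by
  rw [M.c_symm]
  simpa using M.c_smul_left 0 0 a

theorem c_brS_swap (a b e : S) : M.c (M.brS a b) e = -M.c (M.brS a e) b := by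
  rw [M.c_symm (M.brS a e)]
  exact eq_neg_of_add_eq_zero_left (M.c_ad a b e)

theorem apply_c_ι (D : Derivation ℝ R R) (s : S) (x : g) :
    D (M.c s (M.ι x)) = M.c (M.par D s) (M.ι x) := by
  rw [M.par_c, M.par_const, c_zero_right, add_zero]

theorem c_dA_ι (A : Derivation ℝ R R → S) (x : g) (Y Z : Derivation ℝ R R) :
    M.c (M.dA A Y Z) (M.ι x) =
      Y (M.c (A Z) (M.ι x)) - Z (M.c (A Y) (M.ι x)) - M.c (A ⁅Y, Z⁆) (M.ι x) := by
  rw [apply_c_ι, apply_c_ι, dA, c_sub_left, c_sub_left]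

end Pairing

section Connection

variable (M : GaugeModel R g S) {A : Derivation ℝ R R → S}

theorem map_neg_of_linear
    (hAlin : ∀ (f : R) (X Y : Derivation ℝ R R), A (f • X + Y) = f • A X + A Y)
    (X : Derivation ℝ R R) : A (-X) = -A X := by
  have hA0 : A 0 = 0 := by simpa using hAlin 1 0 0
  simpa [hA0, neg_one_smul] using hAlin (-1) X 0

theorem dA_swap (hAneg : ∀ X, A (-X) = -A X) (X Y : Derivation ℝ R R) :
    M.dA A Y X = -M.dA A X Y := by
  rw [dA, dA, ← lie_skew, hAneg]
  abel

theorem dA_σ_left (hAconn : ∀ x : g, A (M.σ x) = M.ι x)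
    (hAeq : ∀ (x : g) (Y : Derivation ℝ R R),
      M.par (M.σ x) (A Y) - A ⁅M.σ x, Y⁆ = -M.brS (M.ι x) (A Y))
    (x : g) (Y : Derivation ℝ R R) :
    M.dA A (M.σ x) Y = -M.brS (M.ι x) (A Y) := by
  rw [dA, hAconn, M.par_const, sub_zero, hAeq]

theorem CS3_σ_left (hAneg : ∀ X, A (-X) = -A X) (hAconn : ∀ x : g, A (M.σ x) = M.ι x)
    (hAeq : ∀ (x : g) (Y : Derivation ℝ R R),
      M.par (M.σ x) (A Y) - A ⁅M.σ x, Y⁆ = -M.brS (M.ι x) (A Y))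
    (x : g) (Y Z : Derivation ℝ R R) :
    M.CS3 A (M.σ x) Y Z = M.c (M.dA A Y Z) (M.ι x) := by
  have hdA_right : M.dA A Z (M.σ x) = M.brS (M.ι x) (A Z) := by
    rw [dA_swap M hAneg, dA_σ_left M hAconn hAeq, neg_neg]
  have hcubic₁ : M.c (M.brS (A Y) (A Z)) (M.ι x) = M.c (M.brS (M.ι x) (A Y)) (A Z) := by
    rw [c_brS_swap, M.brS_antisymm (A Y), c_neg_left, neg_neg]
  have hcubic₂ : M.c (M.brS (A Z) (M.ι x)) (A Y) = M.c (M.brS (M.ι x) (A Y)) (A Z) := by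
    rw [M.brS_antisymm, c_neg_left, c_brS_swap, neg_neg]
  rw [CS3, dA_σ_left M hAconn hAeq, hdA_right, hAconn, c_neg_left, c_brS_swap M (M.ι x) (A Z),
    hcubic₁, hcubic₂]
  module

end Connection

theorem lifted_action_is_canonical_general
    (M : GaugeModel R g S)
    (A : Derivation ℝ R R → S)
    (hAlin : ∀ (f : R) (X Y : Derivation ℝ R R), A (f • X + Y) = f • A X + A Y)
    -- `A` is a principal connection: `A(#x) = x` …
    (hAconn : ∀ x : g, A (M.σ x) = M.ι x)
    -- … and `A` is `Ad`-equivariant: `L_{#x} A = −ad_x ∘ A`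
    (hAeq : ∀ (x : g) (Y : Derivation ℝ R R),
      M.par (M.σ x) (A Y) - A ⁅M.σ x, Y⁆ = - M.brS (M.ι x) (A Y))
    -- `H₀` is (the pullback of) a `3`-form on the base: basic and `G`-invariant
    (H₀ : Derivation ℝ R R → Derivation ℝ R R → Derivation ℝ R R → R)
    (hH₀bas : ∀ (x : g) (Y Z : Derivation ℝ R R), H₀ (M.σ x) Y Z = 0) :
    -- key identity `i_{#x} CS₃(A) = ⟨dA, x⟩_𝔤`
    (∀ (x : g) (Y Z : Derivation ℝ R R),
      M.CS3 A (M.σ x) Y Z = M.c (M.dA A Y Z) (M.ι x)) ∧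
    -- `x ▷ (Y,η) = ([#x,Y], L_{#x}η)`: with `ξ = −½⟨A,x⟩_𝔤` and
    -- `H = H₀ + ½CS₃(A)`, the covector part `L_{#x}η − i_Y dξ − H(#x,Y,·)` of the
    -- Dorfman bracket reduces to the Lie derivative `L_{#x}η`
    (∀ (x : g) (Y : Derivation ℝ R R) (η : Derivation ℝ R R → R)
        (Z : Derivation ℝ R R),
      (M.σ x (η Z) - η ⁅M.σ x, Z⁆)
        - (Y ((-(1 / 2 : ℝ)) • M.c (A Z) (M.ι x))
            - Z ((-(1 / 2 : ℝ)) • M.c (A Y) (M.ι x))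
            - (-(1 / 2 : ℝ)) • M.c (A ⁅Y, Z⁆) (M.ι x))
        - (H₀ (M.σ x) Y Z + (1 / 2 : ℝ) • M.CS3 A (M.σ x) Y Z)
      = M.σ x (η Z) - η ⁅M.σ x, Z⁆) := by
  have hCS3 := CS3_σ_left M (map_neg_of_linear hAlin) hAconn hAeq
  refine ⟨hCS3, fun x Y η Z => ?_⟩
  rw [hH₀bas, hCS3, c_dA_ι, Derivation.map_smul, Derivation.map_smul]
  module

/-- With `H = π*(H₀) + ½ CS₃(A)` and
`ℜ(x) = (#x, −½⟨A,x⟩_𝔤)`, the `H`-twisted Dorfman bracket satisfies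
`x ▷ (Y,η) = [ℜ(x),(Y,η)] = ([#x, Y], L_{#x} η)`: the induced action on
`TP ⊕ T*P` is the canonical lift of the principal action.  The key identity is
`i_{#x} CS₃(A) = ⟨dA, x⟩_𝔤`. -/
theorem lifted_action_is_canonical
    (M : GaugeModel R g S)
    (A : Derivation ℝ R R → S)
    (hAlin : ∀ (f : R) (X Y : Derivation ℝ R R), A (f • X + Y) = f • A X + A Y)
    -- `A` is a principal connection: `A(#x) = x` …
    (hAconn : ∀ x : g, A (M.σ x) = M.ι x)
    -- … and `A` is `Ad`-equivariant: `L_{#x} A = −ad_x ∘ A`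
    (hAeq : ∀ (x : g) (Y : Derivation ℝ R R),
      M.par (M.σ x) (A Y) - A ⁅M.σ x, Y⁆ = - M.brS (M.ι x) (A Y))
    -- `H₀` is (the pullback of) a `3`-form on the base: basic and `G`-invariant
    (H₀ : Derivation ℝ R R → Derivation ℝ R R → Derivation ℝ R R → R)
    (hH₀alt₁ : ∀ X Y Z, H₀ X Y Z = - H₀ Y X Z)
    (hH₀alt₂ : ∀ X Y Z, H₀ X Y Z = - H₀ X Z Y)
    (hH₀bas : ∀ (x : g) (Y Z : Derivation ℝ R R), H₀ (M.σ x) Y Z = 0)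
    (hH₀inv : ∀ (x : g) (Y Z W : Derivation ℝ R R),
      M.σ x (H₀ Y Z W) = H₀ ⁅M.σ x, Y⁆ Z W + H₀ Y ⁅M.σ x, Z⁆ W + H₀ Y Z ⁅M.σ x, W⁆) :
    -- key identity `i_{#x} CS₃(A) = ⟨dA, x⟩_𝔤`
    (∀ (x : g) (Y Z : Derivation ℝ R R),
      M.CS3 A (M.σ x) Y Z = M.c (M.dA A Y Z) (M.ι x)) ∧
    -- `x ▷ (Y,η) = ([#x,Y], L_{#x}η)`: with `ξ = −½⟨A,x⟩_𝔤` and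
    -- `H = H₀ + ½CS₃(A)`, the covector part `L_{#x}η − i_Y dξ − H(#x,Y,·)` of the
    -- Dorfman bracket reduces to the Lie derivative `L_{#x}η`
    (∀ (x : g) (Y : Derivation ℝ R R) (η : Derivation ℝ R R → R)
        (Z : Derivation ℝ R R),
      (M.σ x (η Z) - η ⁅M.σ x, Z⁆)
        - (Y ((-(1 / 2 : ℝ)) • M.c (A Z) (M.ι x))
            - Z ((-(1 / 2 : ℝ)) • M.c (A Y) (M.ι x))
            - (-(1 / 2 : ℝ)) • M.c (A ⁅Y, Z⁆) (M.ι x))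
        - (H₀ (M.σ x) Y Z + (1 / 2 : ℝ) • M.CS3 A (M.σ x) Y Z)
      = M.σ x (η Z) - η ⁅M.σ x, Z⁆) :=
  lifted_action_is_canonical_general M A hAlin hAconn hAeq H₀ hH₀bas

end GaugeModel
end

section
/- Let K ∈ T³₀(E') satisfy K(ψ,ψ',ψ'') = −K(ψ,ψ'',ψ'), K(ψ,ψ',τ(ψ'')) = −K(ψ,ψ'',τ(ψ')) where τ is the involution of a generalized metric G' on E', and the cyclic condition K(ψ,ψ',ψ'') + K(ψ',ψ'',ψ) + K(ψ'',ψ,ψ') = 0. If ∇' is a Levi-Civita connection on E' with respect to G', then ∇^K defined by ∇^K_ψ ψ' = ∇'_ψ ψ' + g_{E'}^{-1} K(ψ,ψ',·) is again a Levi-Civita connection on E' with respect to G' (i.e., ∇^K is metric compatible with both g_{E'} and G', and torsion-free). -/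
variable {R : Type*} [CommRing R] [Algebra ℝ R]
variable {E : Type*} [AddCommGroup E] [Module ℝ E] [Module R E]

/-!
The difference `∇^K − ∇'` pairs to `K`, so by nondegeneracy it is tensorial in both slots and
`∇^K` is again a connection. Each remaining condition is affine in the connection, and passing
from `∇'` to `∇^K` changes it by a `K`-term that vanishes by hypothesis: by
`K(ψ,a,b) + K(ψ,b,a)` for `⟨·,·⟩`, by `K(ψ,a,τb) + K(ψ,b,τa)` for `G' = ⟨·,τ·⟩`, and by
`K(ψ,a,b) − K(a,ψ,b) + K(b,ψ,a)` for the torsion, which is the cyclic sum after one use of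
skew-symmetry.
-/

theorem isLinearMap_of_map_smul_add {S M M₂ : Type*} [Semiring S] [AddCommMonoid M]
    [Module S M] [AddCommGroup M₂] [Module S M₂] {F : M → M₂}
    (hF : ∀ (f : S) (x y : M), F (f • x + y) = f • F x + F y) : IsLinearMap S F := by
  have hF0 : F 0 = 0 := by simpa using hF 1 0 0
  exact ⟨fun x y => by simpa using hF 1 x y, fun f x => by simpa [hF0] using hF f x 0⟩

namespace CourantAlgebroid

variable (C : CourantAlgebroid R E)

theorem isLinearMap_pair_left (b : E) : IsLinearMap R (C.pair · b) :=
  ⟨fun x y => C.pair_add x y b, fun f x => C.pair_smul f x b⟩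

theorem eq_of_forall_pair_eq (hnd : ∀ e : E, (∀ b : E, C.pair e b = 0) → e = 0) {x y : E}
    (h : ∀ b, C.pair x b = C.pair y b) : x = y :=
  sub_eq_zero.mp <| hnd _ fun b => by rw [(C.isLinearMap_pair_left b).map_sub, h, sub_self]

theorem isLinearMap_of_pair {M : Type*} [AddCommMonoid M] [Module R M]
    (hnd : ∀ e : E, (∀ b : E, C.pair e b = 0) → e = 0) {v : M → E}
    (hv : ∀ b, IsLinearMap R (fun x => C.pair (v x) b)) : IsLinearMap R v where
  map_add x y := C.eq_of_forall_pair_eq hnd fun b => by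
    rw [(hv b).map_add, C.pair_add]
  map_smul f x := C.eq_of_forall_pair_eq hnd fun b => by
    rw [(hv b).map_smul, C.pair_smul, smul_eq_mul]

def IsConnection (nab : E → E → E) : Prop :=
  (∀ (f : R) (ψ a : E), nab (f • ψ) a = f • nab ψ a) ∧
  (∀ ψ φ a, nab (ψ + φ) a = nab ψ a + nab φ a) ∧
  (∀ (f : R) (ψ a : E), nab ψ (f • a) = f • nab ψ a + (C.ρ ψ f) • a) ∧
  (∀ ψ a a', nab ψ (a + a') = nab ψ a + nab ψ a')

def IsCompatible (B : E → E → R) (nab : E → E → E) : Prop :=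
  ∀ ψ a b, C.ρ ψ (B a b) = B (nab ψ a) b + B a (nab ψ b)

def torsion (nab : E → E → E) (ψ a b : E) : R :=
  C.pair (nab ψ a - nab a ψ - C.bracket ψ a) b + C.pair (nab b ψ) a

/-- `∇^K` is the deformation of `∇` by `K`: `∇^K_ψ a = ∇_ψ a + g⁻¹ K(ψ, a, ·)`. -/
def IsDeformation (nab : E → E → E) (K : E → E → E → R) (nabK : E → E → E) : Prop :=
  ∀ ψ a b, C.pair (nabK ψ a) b = C.pair (nab ψ a) b + K ψ a b

variable {C} {nab nab' nabK : E → E → E} {K : E → E → E → R}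

theorem IsConnection.add_tensor (hnab : C.IsConnection nab) {κ : E → E → E}
    (hκ₁ : ∀ a, IsLinearMap R (κ · a)) (hκ₂ : ∀ ψ, IsLinearMap R (κ ψ))
    (h : ∀ ψ a, nab' ψ a = nab ψ a + κ ψ a) : C.IsConnection nab' := by
  obtain ⟨hsmul, hadd, hleibniz, hadd'⟩ := hnab
  refine ⟨fun f ψ a => ?_, fun ψ φ a => ?_, fun f ψ a => ?_, fun ψ a a' => ?_⟩
  · rw [h, h, hsmul, (hκ₁ a).map_smul, smul_add]
  · rw [h, h, h, hadd, (hκ₁ a).map_add]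
    abel
  · rw [h, h, hleibniz, (hκ₂ ψ).map_smul, smul_add]
    abel
  · rw [h, h, h, hadd', (hκ₂ ψ).map_add]
    abel

theorem IsDeformation.isConnection (hdef : C.IsDeformation nab K nabK)
    (hnd : ∀ e : E, (∀ b : E, C.pair e b = 0) → e = 0)
    (hK₁ : ∀ a b, IsLinearMap R (K · a b)) (hK₂ : ∀ ψ b, IsLinearMap R (K ψ · b))
    (hnab : C.IsConnection nab) : C.IsConnection nabK := by
  have hκ : ∀ ψ a b, C.pair (nabK ψ a - nab ψ a) b = K ψ a b := fun ψ a b => by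
    rw [(C.isLinearMap_pair_left b).map_sub, hdef, add_sub_cancel_left]
  refine hnab.add_tensor (κ := fun ψ a => nabK ψ a - nab ψ a) (fun a => ?_) (fun ψ => ?_)
    fun ψ a => (add_sub_cancel (nab ψ a) (nabK ψ a)).symm
  · exact C.isLinearMap_of_pair hnd fun b => by simpa only [hκ] using hK₁ a b
  · exact C.isLinearMap_of_pair hnd fun b => by simpa only [hκ] using hK₂ ψ b

theorem IsDeformation.isCompatible (hdef : C.IsDeformation nab K nabK) {B : E → E → R}
    {τ : E → E} (hB : ∀ a b, B a b = C.pair a (τ b))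
    (hτ : ∀ a b, C.pair (τ a) b = C.pair a (τ b))
    (hK : ∀ ψ a b, K ψ a (τ b) + K ψ b (τ a) = 0) (hnab : C.IsCompatible B nab) :
    C.IsCompatible B nabK := by
  have hswap : ∀ a c, B a c = C.pair c (τ a) := fun a c => by rw [hB, ← hτ, C.pair_symm]
  intro ψ a b
  rw [hnab, hB, hB (nabK ψ a), hdef, hswap a, hswap a, hdef]
  linear_combination -hK ψ a b

theorem IsDeformation.torsion_eq (hdef : C.IsDeformation nab K nabK) (ψ a b : E) :
    C.torsion nabK ψ a b = C.torsion nab ψ a b + (K ψ a b - K a ψ b + K b ψ a) := by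
  simp only [torsion, (C.isLinearMap_pair_left _).map_sub]
  rw [hdef, hdef, hdef]
  ring

theorem IsDeformation.torsion_eq_zero (hdef : C.IsDeformation nab K nabK)
    (hKskew : ∀ ψ a b, K ψ a b = - K ψ b a)
    (hKcyclic : ∀ ψ a b, K ψ a b + K a b ψ + K b ψ a = 0)
    (hnab : ∀ ψ a b, C.torsion nab ψ a b = 0) (ψ a b : E) : C.torsion nabK ψ a b = 0 := by
  rw [hdef.torsion_eq, hnab]
  linear_combination hKcyclic ψ a b - hKskew a ψ b

end CourantAlgebroid

theorem K_deformation_of_levi_civita_general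
    (C : CourantAlgebroid R E)
    -- nondegeneracy of `⟨·,·⟩_{E'}` (so that `g_{E'}^{-1}` exists)
    (hnd : ∀ e : E, (∀ b : E, C.pair e b = 0) → e = 0)
    -- the generalized metric `G'` with its involution `τ`
    (G' : E → E → R) (τ : E → E)
    (hτdef : ∀ ψ ψ', G' ψ ψ' = C.pair ψ (τ ψ'))
    (hτsym : ∀ ψ ψ', C.pair (τ ψ) ψ' = C.pair ψ (τ ψ'))
    -- the tensor `K`
    (K : E → E → E → R)
    (hKlin₁ : ∀ (f : R) (ψ φ a b : E), K (f • ψ + φ) a b = f * K ψ a b + K φ a b)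
    (hKlin₂ : ∀ (f : R) (ψ a a' b : E), K ψ (f • a + a') b = f * K ψ a b + K ψ a' b)
    (hK1 : ∀ ψ a b, K ψ a b = - K ψ b a)
    (hK2 : ∀ ψ a b, K ψ a (τ b) + K ψ b (τ a) = 0)
    (hK3 : ∀ ψ a b, K ψ a b + K a b ψ + K b ψ a = 0)
    -- `∇'` is a Levi-Civita connection with respect to `G'`
    (nab : E → E → E)
    (h1 : ∀ (f : R) (ψ a : E), nab (f • ψ) a = f • nab ψ a)
    (h1' : ∀ ψ φ a, nab (ψ + φ) a = nab ψ a + nab φ a)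
    (h2 : ∀ (f : R) (ψ a : E), nab ψ (f • a) = f • nab ψ a + (C.ρ ψ f) • a)
    (h2' : ∀ ψ a a', nab ψ (a + a') = nab ψ a + nab ψ a')
    (hmetric : ∀ ψ a b, C.ρ ψ (C.pair a b) = C.pair (nab ψ a) b + C.pair a (nab ψ b))
    (hG'metric : ∀ ψ a b, C.ρ ψ (G' a b) = G' (nab ψ a) b + G' a (nab ψ b))
    (htorsion : ∀ ψ a b,
      C.pair (nab ψ a - nab a ψ - C.bracket ψ a) b + C.pair (nab b ψ) a = 0)
    -- `∇^K` is the deformation of `∇'` by `K`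
    (nabK : E → E → E)
    (hdef : ∀ ψ a b, C.pair (nabK ψ a) b = C.pair (nab ψ a) b + K ψ a b) :
    -- `∇^K` is again a Levi-Civita connection with respect to `G'`
    (∀ (f : R) (ψ a : E), nabK (f • ψ) a = f • nabK ψ a) ∧
    (∀ ψ φ a, nabK (ψ + φ) a = nabK ψ a + nabK φ a) ∧
    (∀ (f : R) (ψ a : E), nabK ψ (f • a) = f • nabK ψ a + (C.ρ ψ f) • a) ∧
    (∀ ψ a a', nabK ψ (a + a') = nabK ψ a + nabK ψ a') ∧
    (∀ ψ a b, C.ρ ψ (C.pair a b) = C.pair (nabK ψ a) b + C.pair a (nabK ψ b)) ∧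
    (∀ ψ a b, C.ρ ψ (G' a b) = G' (nabK ψ a) b + G' a (nabK ψ b)) ∧
    (∀ ψ a b,
      C.pair (nabK ψ a - nabK a ψ - C.bracket ψ a) b + C.pair (nabK b ψ) a = 0) := by
  have hdef : C.IsDeformation nab K nabK := hdef
  obtain ⟨hsmul, hadd, hleibniz, hadd'⟩ := hdef.isConnection hnd
    (fun a b => isLinearMap_of_map_smul_add fun f ψ φ => hKlin₁ f ψ φ a b)
    (fun ψ b => isLinearMap_of_map_smul_add fun f a a' => hKlin₂ f ψ a a' b)
    ⟨h1, h1', h2, h2'⟩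
  refine ⟨hsmul, hadd, hleibniz, hadd', ?_, ?_, hdef.torsion_eq_zero hK1 hK3 htorsion⟩
  · exact hdef.isCompatible (τ := id) (fun _ _ => rfl) (fun _ _ => rfl)
      (fun ψ a b => by rw [id, id, hK1, neg_add_cancel]) hmetric
  · exact hdef.isCompatible hτdef hτsym hK2 hG'metric

/-- Let `(E',⟨·,·⟩,[·,·])` be a Courant algebroid with a
generalized metric `G'` (with involution `τ`), and let `K ∈ T³₀(E')` satisfy
`K(ψ,ψ',ψ'') = −K(ψ,ψ'',ψ')`, `K(ψ,ψ',τψ'') = −K(ψ,ψ'',τψ')` and the cyclic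
condition `K(ψ,ψ',ψ'') + K(ψ',ψ'',ψ) + K(ψ'',ψ,ψ') = 0`.  If `∇'` is a
Levi-Civita connection with respect to `G'`, then `∇^K` defined by
`∇^K_ψ ψ' = ∇'_ψ ψ' + g_{E'}^{-1} K(ψ,ψ',·)`, i.e. by
`⟨∇^K_ψ a, b⟩ = ⟨∇'_ψ a, b⟩ + K(ψ,a,b)`, is again a Levi-Civita connection with
respect to `G'`: it is a Courant algebroid connection (compatible with `g_{E'}`),
compatible with `G'`, and torsion-free. -/
theorem K_deformation_of_levi_civita
    (C : CourantAlgebroid R E)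
    -- nondegeneracy of `⟨·,·⟩_{E'}` (so that `g_{E'}^{-1}` exists)
    (hnd : ∀ e : E, (∀ b : E, C.pair e b = 0) → e = 0)
    -- the generalized metric `G'` with its involution `τ`
    (G' : E → E → R) (τ : E → E)
    (hτdef : ∀ ψ ψ', G' ψ ψ' = C.pair ψ (τ ψ'))
    (hτinv : ∀ ψ, τ (τ ψ) = ψ)
    (hτsym : ∀ ψ ψ', C.pair (τ ψ) ψ' = C.pair ψ (τ ψ'))
    (hτorth : ∀ ψ ψ', C.pair (τ ψ) (τ ψ') = C.pair ψ ψ')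
    (hτlin : ∀ (f : R) (ψ ψ' : E), τ (f • ψ + ψ') = f • τ ψ + τ ψ')
    -- the tensor `K`
    (K : E → E → E → R)
    (hKlin₁ : ∀ (f : R) (ψ φ a b : E), K (f • ψ + φ) a b = f * K ψ a b + K φ a b)
    (hKlin₂ : ∀ (f : R) (ψ a a' b : E), K ψ (f • a + a') b = f * K ψ a b + K ψ a' b)
    (hKlin₃ : ∀ (f : R) (ψ a b b' : E), K ψ a (f • b + b') = f * K ψ a b + K ψ a b')
    (hK1 : ∀ ψ a b, K ψ a b = - K ψ b a)
    (hK2 : ∀ ψ a b, K ψ a (τ b) + K ψ b (τ a) = 0)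
    (hK3 : ∀ ψ a b, K ψ a b + K a b ψ + K b ψ a = 0)
    -- `∇'` is a Levi-Civita connection with respect to `G'`
    (nab : E → E → E)
    (h1 : ∀ (f : R) (ψ a : E), nab (f • ψ) a = f • nab ψ a)
    (h1' : ∀ ψ φ a, nab (ψ + φ) a = nab ψ a + nab φ a)
    (h2 : ∀ (f : R) (ψ a : E), nab ψ (f • a) = f • nab ψ a + (C.ρ ψ f) • a)
    (h2' : ∀ ψ a a', nab ψ (a + a') = nab ψ a + nab ψ a')
    (hmetric : ∀ ψ a b, C.ρ ψ (C.pair a b) = C.pair (nab ψ a) b + C.pair a (nab ψ b))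
    (hG'metric : ∀ ψ a b, C.ρ ψ (G' a b) = G' (nab ψ a) b + G' a (nab ψ b))
    (htorsion : ∀ ψ a b,
      C.pair (nab ψ a - nab a ψ - C.bracket ψ a) b + C.pair (nab b ψ) a = 0)
    -- `∇^K` is the deformation of `∇'` by `K`
    (nabK : E → E → E)
    (hdef : ∀ ψ a b, C.pair (nabK ψ a) b = C.pair (nab ψ a) b + K ψ a b) :
    -- `∇^K` is again a Levi-Civita connection with respect to `G'`
    (∀ (f : R) (ψ a : E), nabK (f • ψ) a = f • nabK ψ a) ∧
    (∀ ψ φ a, nabK (ψ + φ) a = nabK ψ a + nabK φ a) ∧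
    (∀ (f : R) (ψ a : E), nabK ψ (f • a) = f • nabK ψ a + (C.ρ ψ f) • a) ∧
    (∀ ψ a a', nabK ψ (a + a') = nabK ψ a + nabK ψ a') ∧
    (∀ ψ a b, C.ρ ψ (C.pair a b) = C.pair (nabK ψ a) b + C.pair a (nabK ψ b)) ∧
    (∀ ψ a b, C.ρ ψ (G' a b) = G' (nabK ψ a) b + G' a (nabK ψ b)) ∧
    (∀ ψ a b,
      C.pair (nabK ψ a - nabK a ψ - C.bracket ψ a) b + C.pair (nabK b ψ) a = 0) :=
  K_deformation_of_levi_civita_general C hnd G' τ hτdef hτsym K hKlin₁ hKlin₂ hK1 hK2 hK3 nab h1 h1'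
    h2 h2' hmetric hG'metric htorsion nabK hdef
end

section
/- Variation of the dilaton term: let S[φ] = ∫_P e^{−2φ}{ R(g) − ½⟨H',H'⟩_g + 4⟨dφ,dφ⟩_g − 2Λ } dvol_g with g, H', Λ fixed. For φ' = φ + εν with ν vanishing on ∂P, S[φ'] = S[φ] − 2ε ∫_P e^{−2φ} β(φ) ν dvol_g + o(ε²), where β(φ) = R(g) − ½⟨H',H'⟩_g + 4Δ_g(φ) − 4⟨dφ,dφ⟩_g − 2Λ and Δ_g = −(dδ_g + δ_g d). In particular, the key identity is δ_g(e^{−2φ} dφ) = e^{−2φ}(2⟨dφ,dφ⟩_g − Δ_g(φ)). -/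
/-!
Since `e^{−2(φ+εν)} = e^{−2φ} e^{−2εν}` and `⟨dφ + ε dν, dφ + ε dν⟩` is quadratic in `ε`, the
integrand is `e^{−2εν}(B₀ + εB₁ + ε²B₂)`, whose integral has derivative `I(−2νB₀ + B₁)` at `0`.
The cross term `B₁ = 8⟨dν, e^{−2φ}dφ⟩` is integrated by parts onto `ν`, and the Leibniz rule
for `δ` gives `δ(e^{−2φ}dφ) = e^{−2φ}(2⟨dφ,dφ⟩ + δdφ)`, which recombines with `−2νB₀` into
`−2e^{−2φ}β(φ)ν`.
-/

theorem isLinearMap_of_map_smul_add_s18 {S M N : Type*} [Semiring S] [AddCommMonoid M] [Module S M]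
    [AddCommGroup N] [Module S N] {f : M → N}
    (h : ∀ (r : S) (a b : M), f (r • a + b) = r • f a + f b) : IsLinearMap S f := by
  have hf0 : f 0 = 0 := by simpa using h 1 0 0
  exact ⟨fun a b => by simpa using h 1 a b, fun r a => by simpa [hf0] using h r a 0⟩

section Inner

variable {R Ω : Type*} [CommRing R] [AddCommGroup Ω] [Module R Ω] {inner : Ω → Ω → R}

theorem linearMap_inner_left
    (hlin : ∀ (f : R) (ω ω' μ : Ω), inner (f • ω + ω') μ = f * inner ω μ + inner ω' μ) (μ : Ω) :
    ∃ L : Ω →ₗ[R] R, ∀ ω, inner ω μ = L ω :=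
  ⟨IsLinearMap.mk' _ (isLinearMap_of_map_smul_add_s18 (hlin · · · μ)), fun _ => rfl⟩

variable [Algebra ℝ R] [Module ℝ Ω] [IsScalarTower ℝ R Ω]

theorem inner_add_smul_self_of_symm
    (hsymm : ∀ ω μ, inner ω μ = inner μ ω)
    (hlin : ∀ (f : R) (ω ω' μ : Ω), inner (f • ω + ω') μ = f * inner ω μ + inner ω' μ)
    (ω μ : Ω) (t : ℝ) :
    inner (ω + t • μ) (ω + t • μ) = inner ω ω + (2 * t) • inner ω μ + t ^ 2 • inner μ μ := by
  have hexpand : ∀ ν, inner (ω + t • μ) ν = inner ω ν + t • inner μ ν := fun ν => by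
    obtain ⟨L, hL⟩ := linearMap_inner_left hlin ν
    simp only [hL, map_add, LinearMap.map_smul_of_tower]
  rw [hexpand, hsymm ω, hsymm μ, hexpand, hexpand, hsymm μ ω]
  module

end Inner

section Codifferential

variable {R Ω : Type*} [CommRing R] [Algebra ℝ R] [AddCommGroup Ω] [Module ℝ Ω] [Module R Ω]
  [IsScalarTower ℝ R Ω] {d : R → Ω} {δ : Ω → R} {inner : Ω → Ω → R} {expR : R → R}

theorem codifferential_exp_smul_smul_d
    (hd : ∀ (r : ℝ) (a b : R), d (r • a + b) = r • d a + d b)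
    (hlin : ∀ (f : R) (ω ω' μ : Ω), inner (f • ω + ω') μ = f * inner ω μ + inner ω' μ)
    (hexp_d : ∀ a : R, d (expR a) = expR a • d a)
    (hδf : ∀ (f : R) (ω : Ω), δ (f • ω) = f * δ ω - inner (d f) ω) (c : ℝ) (φ : R) :
    δ (expR (c • φ) • d φ) = expR (c • φ) * (δ (d φ) - c • inner (d φ) (d φ)) := by
  obtain ⟨L, hL⟩ := linearMap_inner_left hlin (d φ)
  rw [hδf, hexp_d, (isLinearMap_of_map_smul_add_s18 hd).map_smul, hL, map_smul,
    LinearMap.map_smul_of_tower, ← hL, smul_eq_mul, mul_sub, mul_smul_comm]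

end Codifferential

theorem hasDerivAt_apply_exp_smul_mul_quadratic {R : Type*} [CommRing R] [Algebra ℝ R]
    {I : R →ₗ[ℝ] ℝ} {expR : R → R} (hexp0 : expR 0 = 1)
    (hder : ∀ a b : R, HasDerivAt (fun t : ℝ => I (expR (t • a) * b)) (I (a * b)) 0)
    (m b₀ b₁ b₂ : R) :
    HasDerivAt (fun t : ℝ => I (expR (t • m) * (b₀ + t • b₁ + t ^ 2 • b₂))) (I (m * b₀ + b₁)) 0 := by
  have hsplit : (fun t : ℝ => I (expR (t • m) * (b₀ + t • b₁ + t ^ 2 • b₂))) = fun t =>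
      I (expR (t • m) * b₀) + t * I (expR (t • m) * b₁) + t ^ 2 * I (expR (t • m) * b₂) := by
    funext t
    simp only [mul_add, mul_smul_comm, map_add, map_smul, smul_eq_mul]
  have h := ((hder m b₀).add ((hasDerivAt_id 0).mul (hder m b₁))).add
    ((hasDerivAt_pow 2 0).mul (hder m b₂))
  rw [hsplit]
  exact h.congr_deriv (by simp [hexp0])

theorem dilaton_variation_general
    (R : Type*) [CommRing R] [Algebra ℝ R]
    (Ω1 : Type*) [AddCommGroup Ω1] [Module ℝ Ω1] [Module R Ω1] [IsScalarTower ℝ R Ω1]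
    (d : R → Ω1) (δ : Ω1 → R) (inner : Ω1 → Ω1 → R)
    (I : R →ₗ[ℝ] ℝ) (expR : R → R) (vanB : R → Prop)
    (rscal h2 : R) (Λ : ℝ) (φ ν : R)
    -- `d` is an `ℝ`-linear derivation
    (hd_lin : ∀ (r : ℝ) (a b : R), d (r • a + b) = r • d a + d b)
    -- `⟨·,·⟩_g` is `R`-bilinear and symmetric
    (hin_symm : ∀ ω μ, inner ω μ = inner μ ω)
    (hin_lin : ∀ (f : R) (ω ω' μ : Ω1), inner (f • ω + ω') μ = f * inner ω μ + inner ω' μ)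
    -- exponential
    (hexp0 : expR 0 = 1)
    (hexp_add : ∀ a b : R, expR (a + b) = expR a * expR b)
    (hexp_d : ∀ a : R, d (expR a) = expR a • d a)
    -- smoothness of the integral in a parameter
    (hder : ∀ a b : R, HasDerivAt (fun t : ℝ => I (expR (t • a) * b)) (I (a * b)) 0)
    -- `d` and `δ` are adjoint under the integral when boundary terms vanish
    (hadj : ∀ (a : R) (ω : Ω1), vanB a → I (inner (d a) ω) = I (a * δ ω))
    -- Leibniz rule for the codifferential
    (hδf : ∀ (f : R) (ω : Ω1), δ (f • ω) = f * δ ω - inner (d f) ω)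
    (hν : vanB ν) :
    -- first variation of the action in the dilaton
    (HasDerivAt
      (fun ε : ℝ => I (expR ((-2 : ℝ) • (φ + ε • ν)) *
        (rscal - (1 / 2 : ℝ) • h2
          + (4 : ℝ) • inner (d (φ + ε • ν)) (d (φ + ε • ν))
          - algebraMap ℝ R (2 * Λ))))
      (-2 * I (expR ((-2 : ℝ) • φ) *
        ((rscal - (1 / 2 : ℝ) • h2 + (4 : ℝ) • (-(δ (d φ)))
          - (4 : ℝ) • inner (d φ) (d φ) - algebraMap ℝ R (2 * Λ)) * ν)))
      0) ∧
    -- key identity `δ_g(e^{−2φ} dφ) = e^{−2φ}(2⟨dφ,dφ⟩_g − Δ_g(φ))`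
    (δ (expR ((-2 : ℝ) • φ) • d φ) =
      expR ((-2 : ℝ) • φ) * ((2 : ℝ) • inner (d φ) (d φ) - (-(δ (d φ))))) := by
  set e := expR ((-2 : ℝ) • φ) with he
  have hkey : δ (e • d φ) = e * ((2 : ℝ) • inner (d φ) (d φ) - -δ (d φ)) := by
    rw [codifferential_exp_smul_smul_d hd_lin hin_lin hexp_d hδf]
    congr 1
    module
  refine ⟨?_, hkey⟩
  obtain ⟨L, hL⟩ := linearMap_inner_left hin_lin (d ν)
  have hd_add_smul : ∀ ε : ℝ, d (φ + ε • ν) = d φ + ε • d ν := fun ε => by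
    rw [add_comm, hd_lin, add_comm]
  have hintegrand : ∀ ε : ℝ, expR ((-2 : ℝ) • (φ + ε • ν)) *
      (rscal - (1 / 2 : ℝ) • h2 + (4 : ℝ) • inner (d (φ + ε • ν)) (d (φ + ε • ν))
        - algebraMap ℝ R (2 * Λ)) =
      expR (ε • ((-2 : ℝ) • ν)) *
        (e * (rscal - (1 / 2 : ℝ) • h2 + (4 : ℝ) • inner (d φ) (d φ) - algebraMap ℝ R (2 * Λ))
          + ε • (8 : ℝ) • inner (d ν) (e • d φ) + ε ^ 2 • (4 : ℝ) • (e * inner (d ν) (d ν))) := by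
    intro ε
    rw [smul_add, hexp_add, ← he, smul_comm, hd_add_smul,
      inner_add_smul_self_of_symm hin_symm hin_lin, hin_symm (d ν) (e • d φ)]
    simp only [hL, map_smul, smul_eq_mul, Algebra.smul_def, map_mul, map_pow, map_ofNat, map_neg]
    ring
  simp only [hintegrand]
  refine (hasDerivAt_apply_exp_smul_mul_quadratic hexp0 hder _ _ _ _).congr_deriv ?_
  rw [map_add, map_smul, hadj ν _ hν, hkey, ← map_smul, ← map_add, ← smul_eq_mul (-2 : ℝ),
    ← map_smul]
  congr 1
  simp only [Algebra.smul_def, map_neg, map_ofNat]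
  ring

/-- Variation of
`S[φ] = ∫_P e^{−2φ}{R(g) − ½⟨H',H'⟩_g + 4⟨dφ,dφ⟩_g − 2Λ} dvol_g` in the dilaton:
for `ν` vanishing on `∂P`, the first variation of `ε ↦ S[φ + εν]` at `ε = 0` is
`−2 ∫_P e^{−2φ} β(φ) ν dvol_g`, where
`β(φ) = R(g) − ½⟨H',H'⟩_g + 4Δ_g(φ) − 4⟨dφ,dφ⟩_g − 2Λ` and `Δ_g(φ) = −δ_g dφ`.
The key identity is `δ_g(e^{−2φ} dφ) = e^{−2φ}(2⟨dφ,dφ⟩_g − Δ_g(φ))`. -/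
theorem dilaton_variation
    (R : Type*) [CommRing R] [Algebra ℝ R]
    (Ω1 : Type*) [AddCommGroup Ω1] [Module ℝ Ω1] [Module R Ω1] [IsScalarTower ℝ R Ω1]
    (d : R → Ω1) (δ : Ω1 → R) (inner : Ω1 → Ω1 → R)
    (I : R →ₗ[ℝ] ℝ) (expR : R → R) (vanB : R → Prop)
    (rscal h2 : R) (Λ : ℝ) (φ ν : R)
    -- `d` is an `ℝ`-linear derivation
    (hd_lin : ∀ (r : ℝ) (a b : R), d (r • a + b) = r • d a + d b)
    (hd_mul : ∀ a b : R, d (a * b) = a • d b + b • d a)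
    -- `⟨·,·⟩_g` is `R`-bilinear and symmetric
    (hin_symm : ∀ ω μ, inner ω μ = inner μ ω)
    (hin_lin : ∀ (f : R) (ω ω' μ : Ω1), inner (f • ω + ω') μ = f * inner ω μ + inner ω' μ)
    -- exponential
    (hexp0 : expR 0 = 1)
    (hexp_add : ∀ a b : R, expR (a + b) = expR a * expR b)
    (hexp_d : ∀ a : R, d (expR a) = expR a • d a)
    -- smoothness of the integral in a parameter
    (hder : ∀ a b : R, HasDerivAt (fun t : ℝ => I (expR (t • a) * b)) (I (a * b)) 0)
    -- `d` and `δ` are adjoint under the integral when boundary terms vanish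
    (hadj : ∀ (a : R) (ω : Ω1), vanB a → I (inner (d a) ω) = I (a * δ ω))
    -- Leibniz rule for the codifferential
    (hδf : ∀ (f : R) (ω : Ω1), δ (f • ω) = f * δ ω - inner (d f) ω)
    (hν : vanB ν) :
    -- first variation of the action in the dilaton
    (HasDerivAt
      (fun ε : ℝ => I (expR ((-2 : ℝ) • (φ + ε • ν)) *
        (rscal - (1 / 2 : ℝ) • h2
          + (4 : ℝ) • inner (d (φ + ε • ν)) (d (φ + ε • ν))
          - algebraMap ℝ R (2 * Λ))))
      (-2 * I (expR ((-2 : ℝ) • φ) *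
        ((rscal - (1 / 2 : ℝ) • h2 + (4 : ℝ) • (-(δ (d φ)))
          - (4 : ℝ) • inner (d φ) (d φ) - algebraMap ℝ R (2 * Λ)) * ν)))
      0) ∧
    -- key identity `δ_g(e^{−2φ} dφ) = e^{−2φ}(2⟨dφ,dφ⟩_g − Δ_g(φ))`
    (δ (expR ((-2 : ℝ) • φ) • d φ) =
      expR ((-2 : ℝ) • φ) * ((2 : ℝ) • inner (d φ) (d φ) - (-(δ (d φ))))) :=
  dilaton_variation_general R Ω1 d δ inner I expR vanB rscal h2 Λ φ ν hd_lin hin_symm hin_lin hexp0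
    hexp_add hexp_d hder hadj hδf hν
end
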